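/- arXiv:0812.4230 — 2 statements merged into one kernel-verified Lean document; each statement's English description precedes it below -/
import Mathlib

section
/- The symplectic Weyl curvature tensor satisfies the extended first Bianchi identity: W_{ijkl} + W_{lijk} + W_{klij} + W_{jkli} = 0 for all i, j, k, l. -/
noncomputable section

open Finset MvPolynomial

/-- The space of symplectic spinors: complex polynomials in `l` variables. -/
abbrev Pol (l : ℕ) := MvPolynomial (Fin l) ℂ

/-- Components `ω_{ij}` of the standard symplectic form on `ℝ^{2l}`. -/
def om (l : ℕ) (i j : Fin (2*l)) : ℝ :=
  if (j : ℕ) = (i : ℕ) + l then 1 else if (i : ℕ) = (j : ℕ) + l then -1 else 0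

/-- Components `ω^{ij}`, defined by `Σ_k ω_{ik} ω^{jk} = δ_i^j`. -/
def omUp (l : ℕ) (i j : Fin (2*l)) : ℝ :=
  if (j : ℕ) = (i : ℕ) + l then 1 else if (i : ℕ) = (j : ℕ) + l then -1 else 0

/-- Symplectic Clifford multiplication by a basis vector `e_i`. -/
def cliff (l : ℕ) (i : Fin (2*l)) (f : Pol l) : Pol l :=
  if h : (i : ℕ) < l then Complex.I • (MvPolynomial.X (⟨(i : ℕ), h⟩ : Fin l) * f)
  else MvPolynomial.pderiv (⟨(i : ℕ) - l, by have := i.isLt; omega⟩ : Fin l) f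

/-- Symplectic Clifford multiplication by an arbitrary vector, extended ℝ-bilinearly. -/
def cliffV (l : ℕ) (v : Fin (2*l) → ℝ) (f : Pol l) : Pol l :=
  ∑ i, ((v i : ℝ) : ℂ) • cliff l i f

/-- Symplectic-spinor-valued `r`-forms (as functions of their `r` vector arguments). -/
abbrev Form (l r : ℕ) := (Fin r → (Fin (2*l) → ℝ)) → Pol l

/-- The standard basis vector `e_i` of `ℝ^{2l}`. -/
def basisVec (l : ℕ) (i : Fin (2*l)) : Fin (2*l) → ℝ := Pi.single i 1

/-- The operator `X`: `(Xφ)(v_1,…,v_{r+1}) = −Σ_a (−1)^{a+1} v_a · φ(v_1,…,v̂_a,…,v_{r+1})`. -/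
def Xop (l r : ℕ) (φ : Form l r) : Form l (r+1) :=
  fun v => -∑ a : Fin (r+1), ((-1 : ℂ)^(a : ℕ)) • cliffV l (v a) (φ (fun b => v (a.succAbove b)))

/-- The operator `Y`: `(Yφ)(v_1,…,v_r) = Σ_{i,j} ω^{ij} e_j · φ(e_i, v_1,…,v_r)`. -/
def Yop (l r : ℕ) (φ : Form l (r+1)) : Form l r :=
  fun v => ∑ i, ∑ j, ((omUp l i j : ℝ) : ℂ) • cliff l j (φ (Fin.cons (basisVec l i) v))

/-- The operator `H = XY + YX` (on 0-forms `Y` vanishes, so there `H = YX`). -/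
def Hop (l : ℕ) : {r : ℕ} → Form l r → Form l r
  | 0, φ => Yop l 0 (Xop l 0 φ)
  | (r+1), φ => Xop l r (Yop l r φ) + Yop l (r+1) (Xop l (r+1) φ)

/-- `X²Y²` on spinor-valued 2-forms. -/
def XXYY (l : ℕ) (φ : Form l 2) : Form l 2 := Xop l 1 (Xop l 0 (Yop l 0 (Yop l 1 φ)))

/-- `XY` on spinor-valued 2-forms. -/
def XY2 (l : ℕ) (φ : Form l 2) : Form l 2 := Xop l 1 (Yop l 1 φ)

/-- The projection `q^{20} = (1/l) X²Y²`. -/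
def q20 (l : ℕ) (φ : Form l 2) : Form l 2 := ((l : ℂ))⁻¹ • XXYY l φ

/-- The projection `q^{21} = (𝕚/(1−l)) (XY − (𝕚/l) X²Y²)`. -/
def q21 (l : ℕ) (φ : Form l 2) : Form l 2 :=
  (Complex.I / (1 - (l : ℂ))) • (XY2 l φ - (Complex.I / (l : ℂ)) • XXYY l φ)

/-- The projection `q^{22} = Id − q^{20} − q^{21}`. -/
def q22 (l : ℕ) (φ : Form l 2) : Form l 2 := φ - q20 l φ - q21 l φ

/-- The spinor-valued 2-form `c · ε^k ∧ ε^m ⊗ s`. -/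
def w2 (l : ℕ) (c : ℝ) (k m : Fin (2*l)) (s : Pol l) : Form l 2 :=
  fun v => ((c * (v 0 k * v 1 m - v 0 m * v 1 k) : ℝ) : ℂ) • s

/-- The symplectic Ricci tensor `σ_{ij} = Σ_{k,m} ω^{km} R_{mjki}`. -/
def ric (l : ℕ) (R : Fin (2*l) → Fin (2*l) → Fin (2*l) → Fin (2*l) → ℝ)
    (i j : Fin (2*l)) : ℝ :=
  ∑ k, ∑ m, omUp l k m * R m j k i

/-- `σ̃_{ijkl}` built from a symmetric tensor `σ`. -/
def st (l : ℕ) (σ : Fin (2*l) → Fin (2*l) → ℝ) (i j k m : Fin (2*l)) : ℝ :=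
  (1/(2*((l : ℝ)+1))) * (om l i m * σ j k - om l i k * σ j m
    + om l j m * σ i k - om l j k * σ i m + 2 * σ i j * om l k m)

/-- The symplectic Weyl tensor `W = R − σ̃`. -/
def weyl (l : ℕ) (R : Fin (2*l) → Fin (2*l) → Fin (2*l) → Fin (2*l) → ℝ)
    (i j k m : Fin (2*l)) : ℝ :=
  R i j k m - st l (ric l R) i j k m

/-- Raising all four indices: `T^{ijkm} = Σ ω^{ia}ω^{jb}ω^{kc}ω^{md} T_{abcd}`. -/
def upT (l : ℕ) (T : Fin (2*l) → Fin (2*l) → Fin (2*l) → Fin (2*l) → ℝ)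
    (i j k m : Fin (2*l)) : ℝ :=
  ∑ a, ∑ b, ∑ c, ∑ d, omUp l i a * omUp l j b * omUp l k c * omUp l m d * T a b c d

/-- Raising both indices of a 2-tensor: `σ^{ij} = Σ ω^{ia}ω^{jb} σ_{ab}`. -/
def up2 (l : ℕ) (σ : Fin (2*l) → Fin (2*l) → ℝ) (i j : Fin (2*l)) : ℝ :=
  ∑ a, ∑ b, omUp l i a * omUp l j b * σ a b

/-- The spinor-valued 2-form `(𝕚/2) Σ T^{ij}_{kl} ε^k ∧ ε^l ⊗ e_{ij}·φ` built from a
4-tensor `T` (used for `R^S φ`, `σ^S φ` and `W^S φ`). -/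
def curvS (l : ℕ) (T : Fin (2*l) → Fin (2*l) → Fin (2*l) → Fin (2*l) → ℝ)
    (φ : Pol l) : Form l 2 :=
  (Complex.I/2) • ∑ i, ∑ j, ∑ k, ∑ m,
    w2 l (∑ a, ∑ b, omUp l i a * omUp l j b * T a b k m) k m (cliff l i (cliff l j φ))

/-- The spinor-valued 2-form `Σ_{i,j,k,d,m} T^{ijk}_d ε^m ∧ ε^d ⊗ e_{mkij}·φ`. -/
def mixS (l : ℕ) (T : Fin (2*l) → Fin (2*l) → Fin (2*l) → Fin (2*l) → ℝ)
    (φ : Pol l) : Form l 2 :=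
  ∑ i, ∑ j, ∑ k, ∑ d, ∑ m,
    w2 l (∑ a, ∑ b, ∑ c, omUp l i a * omUp l j b * omUp l k c * T a b c d) m d
      (cliff l m (cliff l k (cliff l i (cliff l j φ))))

/-!
The curvature part satisfies the four-term identity by itself: the sum of the four first Bianchi
identities at the cyclic shifts of `(i, j, k, m)` is, modulo the symmetries of `R`, twice the
four-term sum. The correction `σ̃` satisfies it too, by a purely algebraic cancellation once one
knows that `ω` is antisymmetric and that the symplectic Ricci tensor is symmetric. The latter
holds because, after one Bianchi identity, `σ_{ij} - σ_{ji}` becomes the contraction of the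
antisymmetric `ω^{km}` against `R_{mkij}`, which is symmetric in `m, k`.
-/

theorem om_antisymm (l : ℕ) (a b : Fin (2*l)) : om l a b = - om l b a := by
  have := a.isLt
  unfold om
  split_ifs <;> first | (exfalso; omega) | norm_num

theorem omUp_antisymm (l : ℕ) (a b : Fin (2*l)) : omUp l a b = - omUp l b a :=
  om_antisymm l a b

theorem sum_sum_eq_zero_of_antisymm {ι : Type*} [Fintype ι] (A : ι → ι → ℝ)
    (hA : ∀ k m, A k m = - A m k) : ∑ k, ∑ m, A k m = 0 := by
  have hneg : ∑ k, ∑ m, A k m = - ∑ k, ∑ m, A k m :=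
    calc ∑ k, ∑ m, A k m = ∑ m, ∑ k, A k m := Finset.sum_comm
      _ = ∑ m, ∑ k, - A m k :=
        Finset.sum_congr rfl fun m _ => Finset.sum_congr rfl fun k _ => hA k m
      _ = - ∑ m, ∑ k, A m k := by simp only [Finset.sum_neg_distrib]
  linarith

theorem st_cyclic_sum_eq_zero (l : ℕ) (σ : Fin (2*l) → Fin (2*l) → ℝ)
    (hσ : ∀ a b, σ a b = σ b a) (i j k m : Fin (2*l)) :
    st l σ i j k m + st l σ m i j k + st l σ k m i j + st l σ j k m i = 0 := by
  unfold st
  rw [om_antisymm l j i, om_antisymm l k i, om_antisymm l m i, om_antisymm l k j,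
    om_antisymm l m j, om_antisymm l m k, hσ j i, hσ k i, hσ m i, hσ k j, hσ m j, hσ m k]
  ring

structure IsFedosovCurvature {ι : Type*} (R : ι → ι → ι → ι → ℝ) : Prop where
  antisymm_right : ∀ i j k m, R i j k m = - R i j m k
  bianchi : ∀ i j k m, R i j k m + R i k m j + R i m j k = 0
  symm_left : ∀ i j k m, R i j k m = R j i k m

namespace IsFedosovCurvature

theorem cyclic_sum_eq_zero {ι : Type*} {R : ι → ι → ι → ι → ℝ} (hR : IsFedosovCurvature R)
    (i j k m : ι) : R i j k m + R m i j k + R k m i j + R j k m i = 0 := by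
  obtain ⟨anti, bianchi, symm⟩ := hR
  linarith [bianchi i j k m, bianchi m i j k, bianchi k m i j, bianchi j k m i,
    symm k i j m, anti i k m j, symm j m i k, anti m j k i,
    symm i m j k, symm m k i j, symm k j m i, symm j i k m]

theorem ric_symm {l : ℕ} {R : Fin (2*l) → Fin (2*l) → Fin (2*l) → Fin (2*l) → ℝ}
    (hR : IsFedosovCurvature R) (i j : Fin (2*l)) : ric l R i j = ric l R j i := by
  have hbianchi : ∀ k m, omUp l k m * R m j k i
      = omUp l k m * R m i k j - omUp l k m * R m k i j := fun k m => by
    linear_combination omUp l k m * (hR.bianchi m j k i - hR.antisymm_right m i j k)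
  have hcontract : ∑ k, ∑ m, omUp l k m * R m k i j = 0 :=
    sum_sum_eq_zero_of_antisymm _ fun k m => by
      rw [omUp_antisymm l k m, hR.symm_left m k i j]
      ring
  simp only [ric, hbianchi, Finset.sum_sub_distrib, hcontract, sub_zero]

end IsFedosovCurvature

theorem stmt_6_general (l : ℕ) (R : Fin (2*l) → Fin (2*l) → Fin (2*l) → Fin (2*l) → ℝ)
    (h1 : ∀ i j k m, R i j k m = - R i j m k)
    (h2 : ∀ i j k m, R i j k m + R i k m j + R i m j k = 0)
    (h3 : ∀ i j k m, R i j k m = R j i k m)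
    (i j k m : Fin (2*l)) :
    weyl l R i j k m + weyl l R m i j k + weyl l R k m i j + weyl l R j k m i = 0 := by
  have hR : IsFedosovCurvature R := ⟨h1, h2, h3⟩
  have hst := st_cyclic_sum_eq_zero l (ric l R) hR.ric_symm i j k m
  simp only [weyl]
  linarith [hR.cyclic_sum_eq_zero i j k m]

/-- extended first Bianchi identity for the symplectic Weyl tensor. -/
theorem stmt_6 (l : ℕ) (hl : 2 ≤ l) (R : Fin (2*l) → Fin (2*l) → Fin (2*l) → Fin (2*l) → ℝ)
    (h1 : ∀ i j k m, R i j k m = - R i j m k)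
    (h2 : ∀ i j k m, R i j k m + R i k m j + R i m j k = 0)
    (h3 : ∀ i j k m, R i j k m = R j i k m)
    (i j k m : Fin (2*l)) :
    weyl l R i j k m + weyl l R m i j k + weyl l R k m i j + weyl l R j k m i = 0 :=
  stmt_6_general l R h1 h2 h3 i j k m

end
end

section
/- For every symplectic spinor s ∈ P, the spinor-valued 2-form ψ := Σ_{i,j} ω_{ij} ε^i∧ε^j ⊗ s satisfies X²Y²ψ = l·ψ. -/
noncomputable section

open Finset MvPolynomial

/-! Evaluate the four operators one at a time. The form `ψ` is `2 ω ⊗ s`; since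
`ω^{ij} = ω_{ij}`, contracting it with `Y` gives the 1-form `v ↦ 2 v·s`, and `Y` of that is the
constant `2l𝕚 s` because each of the `l` pairs `(e_a, e_{a+l})` contributes the commutator
`[e_{a+l}, e_a] = 𝕚`. Applying `X` twice produces `2l𝕚 [v₀, v₁]·s = 2l ω(v₀, v₁) s`, by the
commutation relation `[u, w] = -𝕚 ω(u, w)` of symplectic Clifford multiplication. -/

theorem MvPolynomial.pderiv_pderiv_comm {R σ : Type*} [CommSemiring R] (i j : σ)
    (f : MvPolynomial σ R) : pderiv i (pderiv j f) = pderiv j (pderiv i f) := by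
  classical
  induction f using MvPolynomial.induction_on with
  | C c => simp
  | add p q hp hq => simp [hp, hq]
  | mul_X p k hp =>
    simp [hp, pderiv_X, Pi.single_apply, apply_ite (pderiv i), apply_ite (pderiv j)]
    ring

variable {l : ℕ}

def lo (l : ℕ) (a : Fin l) : Fin (2*l) := ⟨a, by omega⟩

def hi (l : ℕ) (a : Fin l) : Fin (2*l) := ⟨a + l, by omega⟩

@[simp] theorem lo_inj {a b : Fin l} : lo l a = lo l b ↔ a = b := by
  simp [lo, Fin.ext_iff]

@[simp] theorem hi_inj {a b : Fin l} : hi l a = hi l b ↔ a = b := by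
  simp [hi, Fin.ext_iff]

@[simp] theorem lo_ne_hi (a b : Fin l) : lo l a ≠ hi l b := by
  simp [lo, hi, Fin.ext_iff]; omega

@[simp] theorem hi_ne_lo (a b : Fin l) : hi l a ≠ lo l b := (lo_ne_hi b a).symm

theorem exists_lo_or_exists_hi (i : Fin (2*l)) : (∃ a, i = lo l a) ∨ (∃ a, i = hi l a) := by
  by_cases h : (i : ℕ) < l
  · exact Or.inl ⟨⟨i, h⟩, rfl⟩
  · exact Or.inr ⟨⟨i - l, by omega⟩, by ext; simp [hi]; omega⟩

theorem sum_eq_sum_lo_add_sum_hi {M : Type*} [AddCommMonoid M] (f : Fin (2*l) → M) :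
    ∑ i, f i = ∑ a, f (lo l a) + ∑ a, f (hi l a) := by
  rw [← Fin.sum_congr' f (two_mul l).symm, Fin.sum_univ_add]
  congr 1
  exact Finset.sum_congr rfl fun a _ => congrArg f (Fin.ext (by simp [hi]))

theorem om_lo_lo (a b : Fin l) : om l (lo l a) (lo l b) = 0 := by
  have := a.2; have := b.2
  rw [om, if_neg (by simp [lo]; omega), if_neg (by simp [lo]; omega)]

theorem om_hi_hi (a b : Fin l) : om l (hi l a) (hi l b) = 0 := by
  have := a.2; have := b.2
  rw [om, if_neg (by simp [hi]; omega), if_neg (by simp [hi]; omega)]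

theorem om_lo_hi (a b : Fin l) : om l (lo l a) (hi l b) = if a = b then 1 else 0 := by
  have := a.2; have := b.2
  rw [om, if_neg (c := (lo l a : ℕ) = hi l b + l) (by simp [lo, hi]; omega)]
  simp [lo, hi, Fin.ext_iff, eq_comm]

theorem om_hi_lo (a b : Fin l) : om l (hi l a) (lo l b) = if a = b then -1 else 0 := by
  have := a.2; have := b.2
  rw [om, if_neg (by simp [lo, hi]; omega)]
  simp [lo, hi, Fin.ext_iff]

theorem omUp_eq_om : omUp l = om l := rfl

theorem sum_om_smul {M : Type*} [AddCommGroup M] [Module ℝ M]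
    (G : Fin (2*l) → Fin (2*l) → M) :
    ∑ i, ∑ j, om l i j • G i j = ∑ a, (G (lo l a) (hi l a) - G (hi l a) (lo l a)) := by
  rw [Finset.sum_sub_distrib]
  simp [sum_eq_sum_lo_add_sum_hi, om_lo_lo, om_lo_hi, om_hi_hi, om_hi_lo, ite_smul, sub_eq_add_neg]

theorem sum_om_mul (F : Fin (2*l) → Fin (2*l) → ℝ) :
    ∑ i, ∑ j, om l i j * F i j = ∑ a, (F (lo l a) (hi l a) - F (hi l a) (lo l a)) :=
  sum_om_smul F

theorem cliff_lo (a : Fin l) (f : Pol l) : cliff l (lo l a) f = Complex.I • (X a * f) :=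
  dif_pos a.2

theorem cliff_hi (a : Fin l) (f : Pol l) : cliff l (hi l a) f = pderiv a f := by
  rw [cliff, dif_neg (by simp [hi])]
  congr 2
  ext
  simp [hi]

theorem cliff_smul (i : Fin (2*l)) (c : ℂ) (f : Pol l) :
    cliff l i (c • f) = c • cliff l i f := by
  unfold cliff
  split
  · rw [smul_comm, mul_smul_comm]
  · exact (pderiv _).map_smul c f

theorem cliff_sum {ι : Type*} (t : Finset ι) (i : Fin (2*l)) (f : ι → Pol l) :
    cliff l i (∑ x ∈ t, f x) = ∑ x ∈ t, cliff l i (f x) := by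
  unfold cliff
  split
  · rw [Finset.mul_sum, Finset.smul_sum]
  · exact map_sum _ f t

theorem cliff_lo_hi_sub_cliff_hi_lo (a b : Fin l) (f : Pol l) :
    cliff l (lo l a) (cliff l (hi l b) f) - cliff l (hi l b) (cliff l (lo l a) f)
      = (-Complex.I * om l (lo l a) (hi l b)) • f := by
  rw [cliff_hi, cliff_lo, cliff_lo, cliff_hi, Derivation.map_smul, pderiv_mul, om_lo_hi,
    ← smul_sub]
  rcases eq_or_ne a b with rfl | h
  · simp
  · simp [pderiv_X_of_ne h, h]

theorem cliff_comm (p q : Fin (2*l)) (f : Pol l) :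
    cliff l p (cliff l q f) - cliff l q (cliff l p f) = (-Complex.I * om l p q) • f := by
  rcases exists_lo_or_exists_hi p with ⟨a, rfl⟩ | ⟨a, rfl⟩ <;>
    rcases exists_lo_or_exists_hi q with ⟨b, rfl⟩ | ⟨b, rfl⟩
  · simp only [cliff_lo, om_lo_lo, mul_smul_comm, ← mul_assoc, mul_comm (X a) (X b),
      Complex.ofReal_zero, mul_zero, zero_smul, sub_self]
  · exact cliff_lo_hi_sub_cliff_hi_lo a b f
  · rw [← neg_sub, cliff_lo_hi_sub_cliff_hi_lo, om_lo_hi, om_hi_lo]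
    rcases eq_or_ne b a with rfl | h
    · simp
    · simp [h, h.symm]
  · simp only [cliff_hi, om_hi_hi, pderiv_pderiv_comm a b, Complex.ofReal_zero, mul_zero,
      zero_smul, sub_self]

def sympForm (l : ℕ) (u w : Fin (2*l) → ℝ) : ℝ := ∑ p, ∑ q, om l p q * (u p * w q)

theorem sympForm_eq_sum (u w : Fin (2*l) → ℝ) :
    sympForm l u w = ∑ a, (u (lo l a) * w (hi l a) - u (hi l a) * w (lo l a)) :=
  sum_om_mul _

theorem sympForm_basisVec_lo (a : Fin l) (w : Fin (2*l) → ℝ) :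
    sympForm l (basisVec l (lo l a)) w = w (hi l a) := by
  simp [sympForm_eq_sum, basisVec, Pi.single_apply]

theorem sympForm_basisVec_hi (a : Fin l) (w : Fin (2*l) → ℝ) :
    sympForm l (basisVec l (hi l a)) w = -w (lo l a) := by
  simp [sympForm_eq_sum, basisVec, Pi.single_apply]

theorem cliffV_basisVec (i : Fin (2*l)) (f : Pol l) : cliffV l (basisVec l i) f = cliff l i f := by
  simp [cliffV, basisVec, Pi.single_apply, apply_ite (fun r : ℝ => (r : ℂ)), ite_smul]

theorem cliffV_smul (v : Fin (2*l) → ℝ) (c : ℂ) (f : Pol l) :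
    cliffV l v (c • f) = c • cliffV l v f := by
  simp only [cliffV, cliff_smul, Finset.smul_sum, smul_comm c]

theorem cliffV_cliffV (u w : Fin (2*l) → ℝ) (f : Pol l) :
    cliffV l u (cliffV l w f) = ∑ p, ∑ q, ((u p * w q : ℝ) : ℂ) • cliff l p (cliff l q f) := by
  simp only [cliffV, cliff_sum, cliff_smul, Finset.smul_sum, smul_smul, Complex.ofReal_mul]

theorem cliffV_comm (u w : Fin (2*l) → ℝ) (f : Pol l) :
    cliffV l u (cliffV l w f) - cliffV l w (cliffV l u f)
      = (-Complex.I * sympForm l u w) • f := by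
  rw [cliffV_cliffV, cliffV_cliffV,
    Finset.sum_comm (f := fun p q => ((w p * u q : ℝ) : ℂ) • cliff l p (cliff l q f))]
  simp only [mul_comm (w _), ← Finset.sum_sub_distrib, ← smul_sub, cliff_comm, smul_smul,
    ← Finset.sum_smul, sympForm, Complex.ofReal_sum, Finset.mul_sum]
  congr 1
  refine Finset.sum_congr rfl fun p _ => Finset.sum_congr rfl fun q _ => ?_
  push_cast
  ring

theorem sum_w2_om (s : Pol l) :
    ∑ i, ∑ j, w2 l (om l i j) i j s = fun g => ((2 * sympForm l (g 0) (g 1) : ℝ) : ℂ) • s := by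
  funext g
  simp only [Finset.sum_apply, w2, ← Finset.sum_smul, ← Complex.ofReal_sum, sum_om_mul,
    sympForm_eq_sum, Finset.mul_sum]
  congr 2
  refine Finset.sum_congr rfl fun a _ => ?_
  ring

theorem Yop_one_sum_w2_om (s : Pol l) :
    Yop l 1 (∑ i, ∑ j, w2 l (om l i j) i j s) = fun v => (2 : ℂ) • cliffV l (v 0) s := by
  funext v
  rw [sum_w2_om, Yop]
  simp only [Fin.cons_zero, Fin.cons_one, cliff_smul, omUp_eq_om]
  simp only [Complex.coe_smul]
  rw [sum_om_smul, cliffV, Finset.smul_sum, sum_eq_sum_lo_add_sum_hi, ← Finset.sum_add_distrib]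
  refine Finset.sum_congr rfl fun a _ => ?_
  simp only [sympForm_basisVec_lo, sympForm_basisVec_hi, Complex.coe_smul]
  module

theorem Yop_zero_smul_cliffV (c : ℂ) (f : Pol l) :
    Yop l 0 (fun v => c • cliffV l (v 0) f) = fun _ => (c * l * Complex.I) • f := by
  funext v
  simp only [Yop, Fin.cons_zero, cliffV_basisVec, cliff_smul, omUp_eq_om]
  simp only [Complex.coe_smul]
  rw [sum_om_smul]
  simp only [← smul_sub, cliff_comm, om_hi_lo, if_pos, Finset.sum_const, Finset.card_univ,
    Fintype.card_fin, ← Nat.cast_smul_eq_nsmul ℂ, smul_smul]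
  congr 1
  push_cast
  ring

theorem Xop_zero_const (c : ℂ) (f : Pol l) :
    Xop l 0 (fun _ => c • f) = fun v => (-c) • cliffV l (v 0) f := by
  funext v
  simp [Xop, cliffV_smul]

theorem Xop_one_smul_cliffV (c : ℂ) (f : Pol l) :
    Xop l 1 (fun v => c • cliffV l (v 0) f)
      = fun v => (c * Complex.I * sympForm l (v 0) (v 1)) • f := by
  funext v
  rw [Xop, Fin.sum_univ_two]
  simp only [Fin.succAbove_zero, Fin.succ_zero_eq_one,
    Fin.succAbove_ne_zero_zero one_ne_zero, Fin.val_zero, Fin.val_one, pow_zero, pow_one,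
    one_smul, neg_one_smul, cliffV_smul]
  rw [← sub_eq_add_neg, ← smul_sub, cliffV_comm, smul_smul, ← neg_smul]
  congr 1
  ring

theorem stmt_7_general (l : ℕ) (s : Pol l) :
    XXYY l (∑ i, ∑ j, w2 l (om l i j) i j s)
      = (l : ℂ) • (∑ i, ∑ j, w2 l (om l i j) i j s) := by
  rw [XXYY, Yop_one_sum_w2_om, Yop_zero_smul_cliffV, Xop_zero_const, Xop_one_smul_cliffV,
    sum_w2_om]
  funext v
  rw [Pi.smul_apply, smul_smul]
  congr 1
  push_cast
  linear_combination (-2 * l * sympForm l (v 0) (v 1) : ℂ) * Complex.I_mul_I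

/-- `ψ = Σ_{i,j} ω_{ij} ε^i ∧ ε^j ⊗ s` satisfies `X²Y²ψ = l·ψ`. -/
theorem stmt_7 (l : ℕ) (hl : 2 ≤ l) (s : Pol l) :
    XXYY l (∑ i, ∑ j, w2 l (om l i j) i j s)
      = (l : ℂ) • (∑ i, ∑ j, w2 l (om l i j) i j s) :=
  stmt_7_general l s

end
end
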